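/- arXiv:2208.02381 — 3 statements merged into one kernel-verified Lean document; each statement's English description precedes it below -/
import Mathlib

section
/- For m > 0 the equation (1/2)∑_{k∈ℤ} 1/(k²+m+μ) = μ has exactly one real solution μ on (−m, ∞), and this solution is strictly positive. -/
open Set Filter

lemma summable_inv_sq_add (c : ℝ) (hc : 0 < c) :
    Summable (fun k : ℤ => 1 / ((k : ℝ)^2 + c)) := by
  have h1 : Summable (fun k : ℤ => 1 / (k : ℝ)^2) :=
    Real.summable_one_div_int_pow.2 one_lt_two
  refine summable_of_isBigO h1 ?_
  rw [Asymptotics.isBigO_iff]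
  refine ⟨1, ?_⟩
  have hmem : {(0:ℤ)}ᶜ ∈ (cofinite : Filter ℤ) :=
    (Set.finite_singleton (0:ℤ)).compl_mem_cofinite
  filter_upwards [hmem] with k hk
  have hk0 : (k : ℝ) ≠ 0 := by exact_mod_cast hk
  have hk2 : 0 < (k : ℝ)^2 := by positivity
  rw [one_mul]
  have h1 : |1 / ((k : ℝ)^2 + c)| = 1 / ((k : ℝ)^2 + c) := by
    rw [abs_of_pos]; positivity
  have h2 : |1 / (k : ℝ)^2| = 1 / (k : ℝ)^2 := by
    rw [abs_of_pos]; positivity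
  rw [Real.norm_eq_abs, Real.norm_eq_abs, h1, h2]
  apply one_div_le_one_div_of_le hk2
  linarith

lemma summable_inv_sq_add' (m μ : ℝ) (h : -m < μ) :
    Summable (fun k : ℤ => 1 / ((k : ℝ)^2 + m + μ)) := by
  have : (fun k : ℤ => 1 / ((k : ℝ)^2 + m + μ)) =
      (fun k : ℤ => 1 / ((k : ℝ)^2 + (m + μ))) := by
    funext k; ring_nf
  rw [this]
  exact summable_inv_sq_add (m + μ) (by linarith)

/-- The 1D self-consistent mass equation `(1/2) ∑_{k ∈ ℤ} 1/(k²+m+μ) = μ` has exactly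
one solution `μ` on `(−m, ∞)`, and this solution is strictly positive. -/
theorem selfconsistency_1d_unique_positive (m : ℝ) (hm : 0 < m) :
    ∃ μ : ℝ, 0 < μ ∧ μ ∈ Set.Ioi (-m) ∧
      (1/2) * ∑' k : ℤ, 1 / ((k : ℝ)^2 + m + μ) = μ ∧
      ∀ μ' : ℝ, μ' ∈ Set.Ioi (-m) →
        (1/2) * ∑' k : ℤ, 1 / ((k : ℝ)^2 + m + μ') = μ' → μ' = μ := by
  set g : ℝ → ℝ := fun μ => (1/2) * ∑' k : ℤ, 1 / ((k : ℝ)^2 + m + μ) with hg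
  have hpos : ∀ (μ : ℝ) (k : ℤ), -m < μ → 0 < (k : ℝ)^2 + m + μ := by
    intro μ k h
    have := sq_nonneg (k : ℝ)
    linarith
  -- g is strictly antitone on Ioi (-m)
  have hanti : ∀ μ₁ μ₂, -m < μ₁ → μ₁ < μ₂ → g μ₂ < g μ₁ := by
    intro μ₁ μ₂ h₁ h₂
    have key : (∑' k : ℤ, 1 / ((k : ℝ)^2 + m + μ₂)) <
        ∑' k : ℤ, 1 / ((k : ℝ)^2 + m + μ₁) := by
      refine Summable.tsum_lt_tsum (i := 0) ?_ ?_ (summable_inv_sq_add' m μ₂ (by linarith))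
        (summable_inv_sq_add' m μ₁ h₁)
      · intro k
        apply one_div_le_one_div_of_le (hpos μ₁ k h₁)
        linarith
      · apply one_div_lt_one_div_of_lt (hpos μ₁ 0 h₁)
        linarith
    simp only [hg]
    linarith
  -- g is positive on Ioi (-m)
  have hgpos : ∀ μ, -m < μ → 0 < g μ := by
    intro μ h
    have : 0 < ∑' k : ℤ, 1 / ((k : ℝ)^2 + m + μ) := by
      refine Summable.tsum_pos (summable_inv_sq_add' m μ h) (fun k => ?_) 0 ?_
      · exact le_of_lt (one_div_pos.2 (hpos μ k h))
      · exact one_div_pos.2 (hpos μ 0 h)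
    simp only [hg]
    linarith
  -- continuity on Icc 0 b for any b
  set b : ℝ := g 0 + 1 with hb
  have hg0 : 0 < g 0 := hgpos 0 (by linarith)
  have hbpos : 0 < b := by simp only [hb]; linarith
  have hcont : ContinuousOn g (Icc (0:ℝ) b) := by
    apply ContinuousOn.mul continuousOn_const
    refine continuousOn_tsum (u := fun k : ℤ => 1 / ((k : ℝ)^2 + m))
      (fun k => ?_) ?_ (fun k x hx => ?_)
    · refine ContinuousOn.div continuousOn_const
        (by fun_prop) (fun x hx => ?_)
      exact ne_of_gt (hpos x k (by have := hx.1; linarith))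
    · have := summable_inv_sq_add' m 0 (by linarith)
      simpa using this
    · have hx0 : -m < x := by have := hx.1; linarith
      rw [Real.norm_eq_abs, abs_of_pos (one_div_pos.2 (hpos x k hx0))]
      apply one_div_le_one_div_of_le
      · have := sq_nonneg (k : ℝ); linarith
      · have := hx.1; linarith
  -- IVT for h(μ) = g μ - μ on [0, b]
  have hcont' : ContinuousOn (fun μ => g μ - μ) (Icc 0 b) :=
    hcont.sub continuousOn_id
  have hA : 0 < g 0 - 0 := by simpa using hg0
  have hB : g b - b < 0 := by
    have : g b < g 0 := hanti 0 b (by linarith) (by linarith)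
    simp only [hb] at *
    linarith
  have hivt : (0 : ℝ) ∈ (fun μ => g μ - μ) '' Icc 0 b := by
    have := intermediate_value_Icc' (le_of_lt hbpos) hcont'
    exact this ⟨le_of_lt hB, le_of_lt hA⟩
  obtain ⟨μ, hμmem, hμeq⟩ := hivt
  have hμIoi : μ ∈ Set.Ioi (-m) := by
    have := hμmem.1; simp only [Set.mem_Ioi]; linarith
  simp only at hμeq
  have hfix : g μ = μ := by linarith
  have hμpos : 0 < μ := lt_of_lt_of_le (by rw [← hfix]; exact hgpos μ hμIoi) le_rfl
  refine ⟨μ, hμpos, hμIoi, hfix, ?_⟩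
  intro μ' hμ' hfix'
  have hfix2 : g μ' = μ' := hfix'
  by_contra hne
  rcases lt_or_gt_of_ne hne with h | h
  · have := hanti μ' μ hμ' h
    rw [hfix, hfix2] at this
    linarith
  · have := hanti μ μ' hμIoi h
    rw [hfix, hfix2] at this
    linarith
end

section
/- Suppose u : [0,∞) → [0,∞) is C¹ and satisfies u'(t) + m·u(t) + u(t)² ≤ C for all t > 0, with m ≥ 0 and C > 0. Then sup_{t>0} min(t,1)·u(t) ≤ C' for a constant C' depending only on C (independent of u(0)). -/
/-!
With `K = √|C|`, the barrier `v t = K + 2 / t` is a strict supersolution of `v' = C - v²` on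
`(0, ∞)`: `C - v² ≤ -4 / t² < -2 / t² = v'`. Since `u' ≤ C - u²` (the term `m u` is nonnegative),
`u` cannot cross `v` from below, and it starts below `v` because `u` is bounded near `0` while
`v` comes down from `+∞`. Hence `u t ≤ K + 2 / t`, and `min t 1 * u t ≤ K + 2`.
-/

open Set Filter Topology

theorem le_of_deriv_lt_boundary_of_eventually_le_nhdsGT_zero {f f' B B' : ℝ → ℝ}
    (hf : ∀ x, 0 < x → HasDerivAt f (f' x) x) (hB : ∀ x, 0 < x → HasDerivAt B (B' x) x)
    (hnear : ∀ᶠ x in 𝓝[>] 0, f x ≤ B x) (bound : ∀ x, 0 < x → f x = B x → f' x < B' x)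
    {t : ℝ} (ht : 0 < t) : f t ≤ B t := by
  obtain ⟨a, hfa, ha₀, hat⟩ := (hnear.and (Ioo_mem_nhdsGT ht)).exists
  have hpos : ∀ x ∈ Icc a t, 0 < x := fun x hx => ha₀.trans_le hx.1
  refine image_le_of_deriv_right_lt_deriv_boundary' (a := a) (b := t)
    (fun x hx => (hf x (hpos x hx)).continuousAt.continuousWithinAt)
    (fun x hx => (hf x (hpos x (Ico_subset_Icc_self hx))).hasDerivWithinAt) hfa
    (fun x hx => (hB x (hpos x hx)).continuousAt.continuousWithinAt)
    (fun x hx => (hB x (hpos x (Ico_subset_Icc_self hx))).hasDerivWithinAt)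
    (fun x hx => bound x (hpos x (Ico_subset_Icc_self hx))) ⟨hat.le, le_rfl⟩

theorem eventually_le_const_add_div_nhdsGT_zero {u : ℝ → ℝ}
    (hu : ContinuousWithinAt u (Ici 0) 0) (K : ℝ) {c : ℝ} (hc : 0 < c) :
    ∀ᶠ x in 𝓝[>] 0, u x ≤ K + c / x := by
  have hbarrier : Tendsto (fun x : ℝ => K + c / x) (𝓝[>] 0) atTop := by
    simpa only [div_eq_mul_inv] using
      tendsto_atTop_add_const_left _ K (tendsto_inv_nhdsGT_zero.const_mul_atTop hc)
  have hu' : Tendsto u (𝓝[>] 0) (𝓝 (u 0)) :=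
    hu.tendsto.mono_left (nhdsWithin_mono _ Ioi_subset_Ici_self)
  filter_upwards [hu'.eventually_le_const (lt_add_one (u 0)),
    hbarrier.eventually_ge_atTop (u 0 + 1)] with x hle hge
  exact hle.trans hge

theorem hasDerivAt_const_add_two_div (K : ℝ) {x : ℝ} (hx : x ≠ 0) :
    HasDerivAt (fun t => K + 2 / t) (-2 / x ^ 2) x := by
  simpa [div_eq_mul_inv] using ((hasDerivAt_inv hx).const_mul 2).const_add K

theorem le_const_add_two_div_of_deriv_add_sq_le {C K m : ℝ} (hK : 0 ≤ K) (hCK : C ≤ K ^ 2)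
    (hm : 0 ≤ m) {u u' : ℝ → ℝ} (hu_nonneg : ∀ t, 0 ≤ t → 0 ≤ u t)
    (hu_zero : ContinuousWithinAt u (Ici 0) 0) (hu' : ∀ t, 0 < t → HasDerivAt u (u' t) t)
    (hineq : ∀ t, 0 < t → u' t + m * u t + u t ^ 2 ≤ C) {t : ℝ} (ht : 0 < t) :
    u t ≤ K + 2 / t := by
  refine le_of_deriv_lt_boundary_of_eventually_le_nhdsGT_zero hu'
    (fun x hx => hasDerivAt_const_add_two_div K hx.ne')
    (eventually_le_const_add_div_nhdsGT_zero hu_zero K two_pos) (fun x hx hux => ?_) ht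
  have hmu : 0 ≤ m * u x := mul_nonneg hm (hu_nonneg x hx.le)
  have hsq : u x ^ 2 = K ^ 2 + 4 * K / x + 4 / x ^ 2 := by
    rw [hux]; field_simp; ring
  have hKx : 0 ≤ 4 * K / x := by positivity
  have hx2 : 0 < x ^ 2 := by positivity
  calc u' x ≤ C - u x ^ 2 := by linarith [hineq x hx]
    _ ≤ -4 / x ^ 2 := by rw [hsq, neg_div]; linarith
    _ < -2 / x ^ 2 := (div_lt_div_iff_of_pos_right hx2).2 (by norm_num)

theorem min_one_mul_const_add_two_div_le {K t : ℝ} (hK : 0 ≤ K) (ht : 0 < t) :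
    min t 1 * (K + 2 / t) ≤ K + 2 := by
  rcases le_total t 1 with h | h
  · rw [min_eq_left h, mul_add, mul_div_cancel₀ _ ht.ne']
    nlinarith
  · rw [min_eq_right h, one_mul]
    have : 2 / t ≤ 2 := div_le_self zero_le_two h
    linarith

theorem coming_down_from_infinity_general (C : ℝ) :
    ∃ C' : ℝ, 0 < C' ∧
      ∀ (m : ℝ), 0 ≤ m →
      ∀ (u u' : ℝ → ℝ),
        (∀ t, 0 ≤ t → 0 ≤ u t) →
        ContinuousOn u (Set.Ici 0) →
        (∀ t, 0 < t → HasDerivAt u (u' t) t) →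
        (∀ t, 0 < t → ContinuousAt u' t) →
        (∀ t, 0 < t → u' t + m * u t + (u t) ^ 2 ≤ C) →
        ∀ t, 0 < t → min t 1 * u t ≤ C' := by
  set K := Real.sqrt |C|
  have hK : 0 ≤ K := Real.sqrt_nonneg _
  have hCK : C ≤ K ^ 2 := by rw [Real.sq_sqrt (abs_nonneg C)]; exact le_abs_self C
  refine ⟨K + 2, by positivity, fun m hm u u' hu_nonneg hu_cont hu' _ hineq t ht => ?_⟩
  calc min t 1 * u t ≤ min t 1 * (K + 2 / t) :=
        mul_le_mul_of_nonneg_left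
          (le_const_add_two_div_of_deriv_add_sq_le hK hCK hm hu_nonneg
            (hu_cont 0 self_mem_Ici) hu' hineq ht) (le_min ht.le zero_le_one)
    _ ≤ K + 2 := min_one_mul_const_add_two_div_le hK ht

/-- Coming down from infinity: if `u : [0,∞) → [0,∞)` is `C¹` and satisfies
`u'(t) + m u(t) + u(t)² ≤ C` for all `t > 0`, with `m ≥ 0` and `C > 0`, then
`sup_{t>0} min(t,1) u(t) ≤ C'` for a constant `C'` depending only on `C`
(in particular independent of `u(0)` and of `m`). -/
theorem coming_down_from_infinity (C : ℝ) (hC : 0 < C) :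
    ∃ C' : ℝ, 0 < C' ∧
      ∀ (m : ℝ), 0 ≤ m →
      ∀ (u u' : ℝ → ℝ),
        (∀ t, 0 ≤ t → 0 ≤ u t) →
        ContinuousOn u (Set.Ici 0) →
        (∀ t, 0 < t → HasDerivAt u (u' t) t) →
        (∀ t, 0 < t → ContinuousAt u' t) →
        (∀ t, 0 < t → u' t + m * u t + (u t) ^ 2 ≤ C) →
        ∀ t, 0 < t → min t 1 * u t ≤ C' :=
  coming_down_from_infinity_general C
end

section
/- Let U_N be nonnegative random variables and suppose that for every integer q ≥ 1 one has E[U_N^q] ≤ C_q (E[U_N^{q+1}])^{q/(q+1)} N^{-1/2} + C_q and E[U_N^q] ≤ C_q N^{(q-1)/2}. Then for every q ≥ 1 there is a constant C_q' with E[U_N^q] ≤ C_q' uniformly in N. -/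
open MeasureTheory

/-- Exponent after `m` iteration steps at moment level `q`. -/
noncomputable def Eexp (q m : ℕ) : ℝ :=
  ((q : ℝ) - 1) / 2 - ((q : ℝ) / 2) * ∑ j ∈ Finset.Ico (q + 1) (q + 1 + m), (1 : ℝ) / j

lemma Eexp_zero (q : ℕ) : Eexp q 0 = ((q : ℝ) - 1) / 2 := by
  simp [Eexp]

lemma Eexp_step (q m : ℕ) (hq : 1 ≤ q) :
    ((q : ℝ) / (q + 1)) * max 0 (Eexp (q + 1) m) - 1 / 2 ≤ max 0 (Eexp q (m + 1)) := by
  have hq1 : (0 : ℝ) < (q : ℝ) + 1 := by positivity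
  rcases le_or_gt 0 (Eexp (q + 1) m) with h | h
  · rw [max_eq_right h]
    have hsum : ∑ j ∈ Finset.Ico (q + 1) (q + 1 + (m + 1)), (1 : ℝ) / j
        = 1 / ((q : ℝ) + 1) + ∑ j ∈ Finset.Ico (q + 1 + 1) (q + 1 + 1 + m), (1 : ℝ) / j := by
      have h1 : q + 1 + (m + 1) = q + 1 + 1 + m := by omega
      rw [h1, Finset.sum_eq_sum_Ico_succ_bot (by omega : q + 1 < q + 1 + 1 + m)]
      push_cast
      ring
    have key : ((q : ℝ) / (q + 1)) * Eexp (q + 1) m - 1 / 2 = Eexp q (m + 1) := by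
      unfold Eexp
      rw [hsum]
      push_cast
      field_simp
      ring
    rw [key]
    exact le_max_right _ _
  · rw [max_eq_left h.le]
    have : ((q : ℝ) / (q + 1)) * 0 - 1 / 2 ≤ 0 := by norm_num
    exact this.trans (le_max_left _ _)

lemma Eexp_final (q : ℕ) (hq : 1 ≤ q) : max 0 (Eexp q (q ^ 2)) = 0 := by
  have hq0 : (0 : ℝ) < (q : ℝ) := by exact_mod_cast hq
  refine max_eq_left ?_
  have hbound : ((q : ℝ) ^ 2) * ((1 : ℝ) / ((q : ℝ) + (q : ℝ) ^ 2))
      ≤ ∑ j ∈ Finset.Ico (q + 1) (q + 1 + q ^ 2), (1 : ℝ) / j := by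
    have hcard : (Finset.Ico (q + 1) (q + 1 + q ^ 2)).card = q ^ 2 := by
      rw [Nat.card_Ico]; omega
    have := Finset.card_nsmul_le_sum (Finset.Ico (q + 1) (q + 1 + q ^ 2))
      (fun j => (1 : ℝ) / j) ((1 : ℝ) / ((q : ℝ) + (q : ℝ) ^ 2)) ?_
    · rw [hcard] at this
      simpa [nsmul_eq_mul] using this
    · intro j hj
      rw [Finset.mem_Ico] at hj
      have hj1 : (0 : ℝ) < (j : ℝ) := by
        have : 0 < j := by omega
        exact_mod_cast this
      have hj2 : (j : ℝ) ≤ (q : ℝ) + (q : ℝ) ^ 2 := by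
        have : j ≤ q + q ^ 2 := by omega
        exact_mod_cast this
      exact one_div_le_one_div_of_le hj1 hj2
  unfold Eexp
  have h2 : ((q : ℝ) - 1) / 2 ≤ ((q : ℝ) / 2) * (((q : ℝ) ^ 2) * ((1 : ℝ) / ((q : ℝ) + (q : ℝ) ^ 2))) := by
    have hpos : (0 : ℝ) < (q : ℝ) + (q : ℝ) ^ 2 := by positivity
    have heq : ((q : ℝ) / 2) * (((q : ℝ) ^ 2) * ((1 : ℝ) / ((q : ℝ) + (q : ℝ) ^ 2)))
        = (q : ℝ) ^ 3 / (2 * ((q : ℝ) + (q : ℝ) ^ 2)) := by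
      field_simp
    rw [heq, div_le_div_iff₀ (by norm_num : (0:ℝ) < 2) (by positivity)]
    nlinarith
  have h3 : ((q : ℝ) / 2) * (((q : ℝ) ^ 2) * ((1 : ℝ) / ((q : ℝ) + (q : ℝ) ^ 2)))
      ≤ ((q : ℝ) / 2) * ∑ j ∈ Finset.Ico (q + 1) (q + 1 + q ^ 2), (1 : ℝ) / j := by
    apply mul_le_mul_of_nonneg_left hbound (by positivity)
  linarith

/-- Iterative moment bound: if nonnegative random variables `U_N` satisfy, for every
`q ≥ 1`, the recursive inequality
`E[U_N^q] ≤ C_q (E[U_N^{q+1}])^{q/(q+1)} N^{-1/2} + C_q`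
together with the a priori bound `E[U_N^q] ≤ C_q N^{(q−1)/2}`, then for every `q ≥ 1`
the moments `E[U_N^q]` are bounded uniformly in `N`. -/
theorem iterative_moment_bound
    {Ω : Type*} [MeasurableSpace Ω] (μ : Measure Ω) [IsProbabilityMeasure μ]
    (U : ℕ → Ω → ℝ) (C : ℕ → ℝ)
    (hCpos : ∀ q, 0 < C q)
    (hnonneg : ∀ N ω, 0 ≤ U N ω)
    (hrec : ∀ q : ℕ, 1 ≤ q → ∀ N : ℕ, 1 ≤ N →
      ∫ ω, (U N ω) ^ q ∂μ
        ≤ C q * (∫ ω, (U N ω) ^ (q + 1) ∂μ) ^ ((q : ℝ) / (q + 1))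
            * (N : ℝ) ^ (-(1:ℝ)/2) + C q)
    (hapriori : ∀ q : ℕ, 1 ≤ q → ∀ N : ℕ, 1 ≤ N →
      ∫ ω, (U N ω) ^ q ∂μ ≤ C q * (N : ℝ) ^ (((q : ℝ) - 1)/2)) :
    ∀ q : ℕ, 1 ≤ q → ∃ C' : ℝ, ∀ N : ℕ, 1 ≤ N → ∫ ω, (U N ω) ^ q ∂μ ≤ C' := by
  have key : ∀ m : ℕ, ∀ q : ℕ, 1 ≤ q → ∃ D : ℝ, 0 ≤ D ∧
      ∀ N : ℕ, 1 ≤ N → ∫ ω, (U N ω) ^ q ∂μ ≤ D * (N : ℝ) ^ (max 0 (Eexp q m)) := by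
    intro m
    induction m with
    | zero =>
      intro q hq
      refine ⟨C q, (hCpos q).le, fun N hN => ?_⟩
      have hE : max 0 (Eexp q 0) = ((q : ℝ) - 1) / 2 := by
        rw [Eexp_zero]
        refine max_eq_right ?_
        have : (1 : ℝ) ≤ (q : ℝ) := by exact_mod_cast hq
        linarith
      rw [hE]
      exact hapriori q hq N hN
    | succ m ih =>
      intro q hq
      obtain ⟨D, hD0, hD⟩ := ih (q + 1) (by omega)
      set r : ℝ := (q : ℝ) / (q + 1) with hr
      have hr0 : 0 ≤ r := by positivity
      refine ⟨C q * D ^ r + C q,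
        add_nonneg (mul_nonneg (hCpos q).le (Real.rpow_nonneg hD0 r)) (hCpos q).le,
        fun N hN => ?_⟩
      have hN1 : (1 : ℝ) ≤ (N : ℝ) := by exact_mod_cast hN
      have hNpos : (0 : ℝ) < (N : ℝ) := by linarith
      set a : ℝ := max 0 (Eexp (q + 1) m) with ha
      set b : ℝ := max 0 (Eexp q (m + 1)) with hb
      have hb0 : 0 ≤ b := le_max_left _ _
      have h1 : ∫ ω, (U N ω) ^ (q + 1) ∂μ ≤ D * (N : ℝ) ^ a := hD N hN
      have h0 : 0 ≤ ∫ ω, (U N ω) ^ (q + 1) ∂μ :=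
        integral_nonneg fun ω => pow_nonneg (hnonneg N ω) _
      have hstep : r * a - 1 / 2 ≤ b := Eexp_step q m hq
      have hrpow : (∫ ω, (U N ω) ^ (q + 1) ∂μ) ^ r ≤ D ^ r * (N : ℝ) ^ (a * r) := by
        calc (∫ ω, (U N ω) ^ (q + 1) ∂μ) ^ r
            ≤ (D * (N : ℝ) ^ a) ^ r := Real.rpow_le_rpow h0 h1 hr0
          _ = D ^ r * (N : ℝ) ^ (a * r) := by
              rw [Real.mul_rpow hD0 (Real.rpow_nonneg hNpos.le _),
                ← Real.rpow_mul hNpos.le]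
      have hexp : (N : ℝ) ^ (a * r) * (N : ℝ) ^ (-(1:ℝ)/2) ≤ (N : ℝ) ^ b := by
        rw [← Real.rpow_add hNpos]
        apply Real.rpow_le_rpow_of_exponent_le hN1
        have : a * r + -(1:ℝ)/2 = r * a - 1/2 := by ring
        rw [this]; exact hstep
      have hNb1 : (1 : ℝ) ≤ (N : ℝ) ^ b := Real.one_le_rpow hN1 hb0
      have hNhalf : (0 : ℝ) ≤ (N : ℝ) ^ (-(1:ℝ)/2) := (Real.rpow_pos_of_pos hNpos _).le
      calc ∫ ω, (U N ω) ^ q ∂μ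
          ≤ C q * (∫ ω, (U N ω) ^ (q + 1) ∂μ) ^ r * (N : ℝ) ^ (-(1:ℝ)/2) + C q :=
            hrec q hq N hN
        _ ≤ C q * (D ^ r * (N : ℝ) ^ (a * r)) * (N : ℝ) ^ (-(1:ℝ)/2) + C q := by
            gcongr
            exact (hCpos q).le
        _ = C q * D ^ r * ((N : ℝ) ^ (a * r) * (N : ℝ) ^ (-(1:ℝ)/2)) + C q := by ring
        _ ≤ C q * D ^ r * (N : ℝ) ^ b + C q * (N : ℝ) ^ b := by
            gcongr
            · exact mul_nonneg (hCpos q).le (Real.rpow_nonneg hD0 r)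
            · nlinarith [(hCpos q).le]
        _ = (C q * D ^ r + C q) * (N : ℝ) ^ b := by ring
  intro q hq
  obtain ⟨D, hD0, hD⟩ := key (q ^ 2) q hq
  refine ⟨D, fun N hN => ?_⟩
  have := hD N hN
  rwa [Eexp_final q hq, Real.rpow_zero, mul_one] at this
end
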